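/- Consider the deterministic n × n gridworld with absorbing target t, trap set Z, target reward R_T > 0, discount γ ∈ (0,1), and optimal action-value function Q*, partitioned into m = q² equal axis-aligned square cores with assembled strict-decomposition Bellman operator H^hm. Assume every non-target state has a trap-free path to t of length at most D_T. Then for every state-action pair (s,a) with f(s,a) ∉ C_{i(s)} and f(s,a) ≠ t, it holds that ((H^hm Q*)(s,a) − Q*(s,a))² ≥ γ^{2 D_T} R_T². -/

import Mathlib

/-- The four actions of the gridworld: unit moves up, down, left, right. -/
inductive Act : Type
  | up | down | left | right
deriving DecidableEq

instance : Fintype Act :=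
  ⟨{Act.up, Act.down, Act.left, Act.right}, fun x => by cases x <;> simp⟩

instance : Nonempty Act := ⟨Act.up⟩

/-- The clamped unit move on the `n × n` grid: an attempted move off the grid
leaves the state unchanged. -/
def Act.move {n : ℕ} (s : Fin n × Fin n) : Act → Fin n × Fin n
  | .up => (⟨s.1.1 - 1, by have := s.1.2; omega⟩, s.2)
  | .down => (⟨if s.1.1 + 1 < n then s.1.1 + 1 else s.1.1, by have := s.1.2; split <;> omega⟩, s.2)
  | .left => (s.1, ⟨s.2.1 - 1, by have := s.2.2; omega⟩)
  | .right => (s.1, ⟨if s.2.1 + 1 < n then s.2.1 + 1 else s.2.1, by have := s.2.2; split <;> omega⟩)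

/-- The deterministic successor map with absorbing target `t`. -/
def gridStep {n : ℕ} (t : Fin n × Fin n) (s : Fin n × Fin n) (a : Act) : Fin n × Fin n :=
  if s = t then t else Act.move s a

/-- Successor-based rewards: entering the target `t` gives `R_T`, entering a trap `z ∈ Z`
gives `−R_Z(z)`, all other transitions give zero, and `r(t,a,t) = 0`. -/
noncomputable def gridReward {n : ℕ} (t : Fin n × Fin n) (Z : Finset (Fin n × Fin n))
    (RT : ℝ) (RZ : Fin n × Fin n → ℝ) (s : Fin n × Fin n) (a : Act) : ℝ :=
  if s = t then 0
  else if gridStep t s a = t then RT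
  else if gridStep t s a ∈ Z then -RZ (gridStep t s a)
  else 0

/-- `V_Q(s) = max_a Q(s,a)`. -/
noncomputable def VQ {n : ℕ} (Q : Fin n × Fin n → Act → ℝ) (s : Fin n × Fin n) : ℝ :=
  Finset.univ.sup' Finset.univ_nonempty (Q s)

/-- The Bellman optimality operator `(HQ)(s,a) = r(s,a,f(s,a)) + γ V_Q(f(s,a))`. -/
noncomputable def gridBellman {n : ℕ} (t : Fin n × Fin n) (Z : Finset (Fin n × Fin n))
    (RT : ℝ) (RZ : Fin n × Fin n → ℝ) (γ : ℝ)
    (Q : Fin n × Fin n → Act → ℝ) (s : Fin n × Fin n) (a : Act) : ℝ :=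
  gridReward t Z RT RZ s a + γ * VQ Q (gridStep t s a)

/-- Two states lie in the same axis-aligned square core of side `n/q`
(the grid being partitioned into `m = q²` such cores). -/
def sameCore (n q : ℕ) (s s' : Fin n × Fin n) : Prop :=
  s.1.1 / (n / q) = s'.1.1 / (n / q) ∧ s.2.1 / (n / q) = s'.2.1 / (n / q)

instance {n q : ℕ} (s s' : Fin n × Fin n) : Decidable (sameCore n q s s') :=
  inferInstanceAs (Decidable (_ ∧ _))

/-- The assembled strict-decomposition Bellman operator
`(H^hm Q)(s,a) = r(s,a,f(s,a)) + γ·1{f(s,a) ∈ C_{i(s)}}·V_Q(f(s,a))`. -/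
noncomputable def gridBellmanHM {n : ℕ} (q : ℕ) (t : Fin n × Fin n)
    (Z : Finset (Fin n × Fin n)) (RT : ℝ) (RZ : Fin n × Fin n → ℝ) (γ : ℝ)
    (Q : Fin n × Fin n → Act → ℝ) (s : Fin n × Fin n) (a : Act) : ℝ :=
  gridReward t Z RT RZ s a +
    γ * (if sameCore n q (gridStep t s a) s then VQ Q (gridStep t s a) else 0)

/-- A trap-free path from `u` to `t` of length `d ≥ 1`: a sequence
`u = p 0, p 1, …, p d = t` following the successor map, whose intermediate states
avoid `Z ∪ {t}`. -/
def TrapFreePath {n : ℕ} (t : Fin n × Fin n) (Z : Finset (Fin n × Fin n))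
    (u : Fin n × Fin n) (d : ℕ) : Prop :=
  ∃ (p : ℕ → Fin n × Fin n) (acts : ℕ → Act),
    p 0 = u ∧ p d = t ∧
    (∀ j < d, p (j + 1) = gridStep t (p j) (acts j)) ∧
    (∀ j, 1 ≤ j → j ≤ d - 1 → p j ∉ Z ∧ p j ≠ t)

lemma VQ_target_eq_zero {n : ℕ} (t : Fin n × Fin n) (Z : Finset (Fin n × Fin n))
    (RT : ℝ) (RZ : Fin n × Fin n → ℝ) (γ : ℝ) (hγ : 0 < γ ∧ γ < 1)
    (Qstar : Fin n × Fin n → Act → ℝ)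
    (hfix : ∀ s a, gridBellman t Z RT RZ γ Qstar s a = Qstar s a) :
    VQ Qstar t = 0 := by
  have hQa : ∀ a : Act, Qstar t a = γ * VQ Qstar t := by
    intro a
    rw [← hfix t a]
    simp [gridBellman, gridReward, gridStep]
  have hV : VQ Qstar t = γ * VQ Qstar t := by
    have h1 : Finset.univ.sup' Finset.univ_nonempty (Qstar t) = γ * VQ Qstar t := by
      rw [funext hQa]
      exact Finset.sup'_const Finset.univ_nonempty _
    exact h1
  nlinarith [hγ.1, hγ.2]

lemma path_value_lb {n : ℕ} (t : Fin n × Fin n) (Z : Finset (Fin n × Fin n))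
    (RT : ℝ) (hRT : 0 < RT) (RZ : Fin n × Fin n → ℝ)
    (γ : ℝ) (hγ : 0 < γ ∧ γ < 1)
    (Qstar : Fin n × Fin n → Act → ℝ)
    (hfix : ∀ s a, gridBellman t Z RT RZ γ Qstar s a = Qstar s a) :
    ∀ d, 1 ≤ d → ∀ u : Fin n × Fin n, u ≠ t → TrapFreePath t Z u d →
      γ ^ (d - 1) * RT ≤ VQ Qstar u := by
  intro d
  induction d with
  | zero => omega
  | succ k ih =>
    intro _ u hu ⟨p, acts, hp0, hpd, hstep, hmid⟩
    rcases Nat.eq_zero_or_pos k with hk | hk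
    · -- d = 1 : one step to target
      subst hk
      have hs : gridStep t u (acts 0) = t := by
        rw [← hp0, ← hstep 0 (by omega)]; exact hpd
      have hQ : Qstar u (acts 0) = RT := by
        rw [← hfix u (acts 0)]
        simp [gridBellman, gridReward, hs, hu,
          VQ_target_eq_zero t Z RT RZ γ hγ Qstar hfix]
      calc γ ^ (1 - 1) * RT = RT := by simp
        _ = Qstar u (acts 0) := hQ.symm
        _ ≤ VQ Qstar u := Finset.le_sup' _ (Finset.mem_univ _)
    · -- d = k + 1 with k ≥ 1
      have hp1 : p 1 ∉ Z ∧ p 1 ≠ t := hmid 1 le_rfl (by omega)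
      have hpath' : TrapFreePath t Z (p 1) k := by
        refine ⟨fun j => p (j + 1), fun j => acts (j + 1), rfl, hpd, ?_, ?_⟩
        · intro j hj; exact hstep (j + 1) (by omega)
        · intro j hj1 hj2; exact hmid (j + 1) (by omega) (by omega)
      have hV1 := ih hk (p 1) hp1.2 hpath'
      have hs : gridStep t u (acts 0) = p 1 := by
        rw [← hp0, ← hstep 0 (by omega)]
      have hQ : Qstar u (acts 0) = γ * VQ Qstar (p 1) := by
        rw [← hfix u (acts 0)]
        simp [gridBellman, gridReward, hs, hu, hp1.1, hp1.2]
      have hkey : γ ^ (k + 1 - 1) * RT ≤ Qstar u (acts 0) := by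
        rw [hQ]
        have : γ ^ k = γ * γ ^ (k - 1) := by
          rw [← pow_succ']; congr 1; omega
        calc γ ^ (k + 1 - 1) * RT = γ * (γ ^ (k - 1) * RT) := by
              rw [Nat.add_sub_cancel, this]; ring
          _ ≤ γ * VQ Qstar (p 1) := by
              exact mul_le_mul_of_nonneg_left hV1 hγ.1.le
      exact hkey.trans (Finset.le_sup' _ (Finset.mem_univ _))

/-- **Pointwise deviation lower bound at useful boundary pairs.**
If every non-target state has a trap-free path to `t` of length at most `D_T`, then for
every `(s,a)` with `f(s,a) ∉ C_{i(s)}` and `f(s,a) ≠ t`,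
`((H^hm Q*)(s,a) − Q*(s,a))² ≥ γ^{2 D_T} R_T²`. -/
theorem boundary_pair_deviation_lower_bound
    (n q DT : ℕ) (hq : 2 ≤ q) (hqn : q ∣ n)
    (t : Fin n × Fin n) (Z : Finset (Fin n × Fin n)) (htZ : t ∉ Z)
    (RT : ℝ) (hRT : 0 < RT) (RZ : Fin n × Fin n → ℝ) (hRZ : ∀ z ∈ Z, 0 < RZ z)
    (γ : ℝ) (hγ : 0 < γ ∧ γ < 1)
    (Qstar : Fin n × Fin n → Act → ℝ)
    (hfix : ∀ s a, gridBellman t Z RT RZ γ Qstar s a = Qstar s a)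
    (hpath : ∀ s : Fin n × Fin n, s ≠ t → ∃ d, 1 ≤ d ∧ d ≤ DT ∧ TrapFreePath t Z s d) :
    ∀ (s : Fin n × Fin n) (a : Act), ¬ sameCore n q (gridStep t s a) s →
      gridStep t s a ≠ t →
      (gridBellmanHM q t Z RT RZ γ Qstar s a - Qstar s a) ^ 2
        ≥ γ ^ (2 * DT) * RT ^ 2 := by
  intro s a hcore hst
  obtain ⟨d, hd1, hdDT, hpth⟩ := hpath (gridStep t s a) hst
  have hDT1 : 1 ≤ DT := le_trans hd1 hdDT
  have hV := path_value_lb t Z RT hRT RZ γ hγ Qstar hfix d hd1 _ hst hpth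
  have hmono : γ ^ (DT - 1) ≤ γ ^ (d - 1) :=
    pow_le_pow_of_le_one hγ.1.le hγ.2.le (by omega)
  have hVlb : γ ^ (DT - 1) * RT ≤ VQ Qstar (gridStep t s a) :=
    le_trans (mul_le_mul_of_nonneg_right hmono hRT.le) hV
  have hdiff : gridBellmanHM q t Z RT RZ γ Qstar s a - Qstar s a
      = -(γ * VQ Qstar (gridStep t s a)) := by
    rw [← hfix s a]
    simp [gridBellmanHM, gridBellman, hcore]
  rw [hdiff, neg_pow, even_two.neg_one_pow, one_mul]
  have h1 : γ ^ DT * RT ≤ γ * VQ Qstar (gridStep t s a) := by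
    have : γ ^ DT = γ * γ ^ (DT - 1) := by
      rw [← pow_succ']; congr 1; omega
    rw [this, mul_assoc]
    exact mul_le_mul_of_nonneg_left hVlb hγ.1.le
  have hγ0 := hγ.1
  have h2 : 0 ≤ γ ^ DT * RT := by positivity
  calc γ ^ (2 * DT) * RT ^ 2 = (γ ^ DT * RT) ^ 2 := by
        rw [mul_pow, ← pow_mul]; ring_nf
    _ ≤ (γ * VQ Qstar (gridStep t s a)) ^ 2 := by
        exact pow_le_pow_left₀ h2 h1 2
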